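/- arXiv:2311.03503 — 4 statements merged into one kernel-verified Lean document; each statement's English description precedes it below -/
import Mathlib

section
/- Let A be a symmetric 2×2 complex matrix of rank 1, let Q(K) = det(K) − trace(AK)² and Q∨(S) = det(S) + trace(adj(A)S)². Define ∇Q(K) = adj(K) − 2·trace(AK)·A and ∇Q∨(S) = adj(S) + 2·trace(adj(A)S)·adj(A). Then (∇Q∨ ∘ ∇Q)(K) = K for every symmetric 2×2 matrix K. -/
/-- For a rank-1 symmetric 2×2 matrix `A`, with `∇Q(K) = adj(K) − 2 trace(AK)·A`
and `∇Q∨(S) = adj(S) + 2 trace(adj(A)S)·adj(A)`, we have `(∇Q∨ ∘ ∇Q)(K) = K`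
for every symmetric 2×2 matrix `K`. -/
theorem gradQdual_comp_gradQ (A : Matrix (Fin 2) (Fin 2) ℂ) (hA : A.IsSymm)
    (hrank : A.rank = 1) (K : Matrix (Fin 2) (Fin 2) ℂ) (hK : K.IsSymm) :
    let gradQ : Matrix (Fin 2) (Fin 2) ℂ → Matrix (Fin 2) (Fin 2) ℂ :=
      fun K => K.adjugate - (2 * (A * K).trace) • A
    let gradQdual : Matrix (Fin 2) (Fin 2) ℂ → Matrix (Fin 2) (Fin 2) ℂ :=
      fun S => S.adjugate + (2 * (A.adjugate * S).trace) • A.adjugate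
    gradQdual (gradQ K) = K := by
  intro gradQ gradQdual
  have hdet : A.det = 0 := by
    by_contra h
    have : A.rank = 2 := by
      simpa using Matrix.rank_of_isUnit A ((Matrix.isUnit_iff_isUnit_det A).2 (Ne.isUnit h))
    omega
  rw [Matrix.det_fin_two] at hdet
  have ha : A 1 0 = A 0 1 := hA.apply 0 1
  have hk : K 1 0 = K 0 1 := hK.apply 0 1
  rw [ha] at hdet
  set t : ℂ := A 0 0 * K 0 0 + 2 * A 0 1 * K 0 1 + A 1 1 * K 1 1 with ht
  simp only [gradQ, gradQdual]
  ext i j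
  fin_cases i <;> fin_cases j <;>
    simp only [Matrix.adjugate_fin_two, Matrix.trace_fin_two, Matrix.mul_apply,
      Fin.sum_univ_two, Matrix.sub_apply, Matrix.add_apply, Matrix.smul_apply,
      Matrix.of_apply, Matrix.cons_val', Matrix.cons_val_zero, Matrix.cons_val_one,
      Matrix.head_cons, Matrix.head_fin_const, Matrix.empty_val',
      Matrix.cons_val_fin_one, smul_eq_mul, Fin.mk_zero, Fin.mk_one,
      Fin.isValue, ha, hk]
  · linear_combination (-8 * t * A 1 1) * hdet
  · linear_combination (8 * t * A 0 1) * hdet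
  · linear_combination (8 * t * A 0 1) * hdet
  · linear_combination (-8 * t * A 0 0) * hdet
end

section
/- Let Φ(s₁₁,s₁₂,s₂₂) = 4·(s₂₂/(s₁₁s₂₂ − s₁₂² + s₂₂²))². With the trace pairing on symmetric 2×2 matrices, the map MLE(S) = −∇_S log Φ equals (2/(s₂₂(s₁₁s₂₂ − s₁₂² + s₂₂²))) · [[s₂₂², −s₁₂s₂₂],[−s₁₂s₂₂, s₁₂² + s₂₂²]], and it satisfies det(MLE(S)) = Φ(S), i.e., Φ solves the homaloidal PDE Φ = det(−∇ log Φ). -/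
/-!
With `D = s₁₁s₂₂ − s₁₂² + s₂₂²` we have `log Φ = log 4 + 2 log s₂₂ − 2 log D`, so every partial
derivative of `log Φ` is the logarithmic derivative of a function `c · (f / g)²`, namely
`2 (f′/f − g′/g)`. This gives the entries of `−∇ log Φ` in closed form; the matrix formula and
the identity `det (−∇ log Φ) = Φ` are then identities of rational functions.
-/

noncomputable def Phi4 (s11 s12 s22 : ℂ) : ℂ :=
  4 * (s22 / (s11 * s22 - s12 ^ 2 + s22 ^ 2)) ^ 2

theorem HasDerivAt.logDeriv_const_mul_div_sq {𝕜 𝕜' : Type*} [NontriviallyNormedField 𝕜]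
    [NontriviallyNormedField 𝕜'] [NormedAlgebra 𝕜 𝕜'] {f g : 𝕜 → 𝕜'} {f' g' c : 𝕜'} {x : 𝕜}
    (hf : HasDerivAt f f' x) (hg : HasDerivAt g g' x) (hc : c ≠ 0) (hfx : f x ≠ 0)
    (hgx : g x ≠ 0) :
    logDeriv (fun z => c * (f z / g z) ^ 2) x = 2 * (f' / f x - g' / g x) := by
  rw [logDeriv_const_mul x c hc,
    logDeriv_fun_pow (f := fun z => f z / g z) (hf.differentiableAt.div hg.differentiableAt hgx),
    logDeriv_div x hfx hgx hf.differentiableAt hg.differentiableAt, logDeriv_apply,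
    logDeriv_apply, hf.deriv, hg.deriv]
  norm_num

section Phi4

variable {s11 s12 s22 : ℂ}

theorem logDeriv_Phi4_s11 (hD : s11 * s22 - s12 ^ 2 + s22 ^ 2 ≠ 0) (h22 : s22 ≠ 0) :
    logDeriv (fun t => Phi4 t s12 s22) s11 = -(2 * s22 / (s11 * s22 - s12 ^ 2 + s22 ^ 2)) := by
  have hD' : HasDerivAt (fun t => t * s22 - s12 ^ 2 + s22 ^ 2) s22 s11 := by
    simpa using (((hasDerivAt_id s11).mul_const s22).sub_const (s12 ^ 2)).add_const (s22 ^ 2)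
  refine ((hasDerivAt_const s11 s22).logDeriv_const_mul_div_sq hD' (by norm_num) h22 hD).trans ?_
  ring

theorem logDeriv_Phi4_s12 (hD : s11 * s22 - s12 ^ 2 + s22 ^ 2 ≠ 0) (h22 : s22 ≠ 0) :
    logDeriv (fun t => Phi4 s11 t s22) s12 = 4 * s12 / (s11 * s22 - s12 ^ 2 + s22 ^ 2) := by
  have hD' : HasDerivAt (fun t => s11 * s22 - t ^ 2 + s22 ^ 2) (-(2 * s12)) s12 := by
    simpa using ((hasDerivAt_pow 2 s12).const_sub (s11 * s22)).add_const (s22 ^ 2)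
  refine ((hasDerivAt_const s12 s22).logDeriv_const_mul_div_sq hD' (by norm_num) h22 hD).trans ?_
  ring

theorem logDeriv_Phi4_s22 (hD : s11 * s22 - s12 ^ 2 + s22 ^ 2 ≠ 0) (h22 : s22 ≠ 0) :
    logDeriv (fun t => Phi4 s11 s12 t) s22 =
      -(2 * (s12 ^ 2 + s22 ^ 2) / (s22 * (s11 * s22 - s12 ^ 2 + s22 ^ 2))) := by
  have hD' : HasDerivAt (fun t => s11 * t - s12 ^ 2 + t ^ 2) (s11 + 2 * s22) s22 := by
    simpa using (((hasDerivAt_id s22).const_mul s11).sub_const (s12 ^ 2)).fun_add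
      (hasDerivAt_pow 2 s22)
  refine ((hasDerivAt_id s22).logDeriv_const_mul_div_sq hD' (by norm_num) h22 hD).trans ?_
  simp only [id_eq]
  rw [div_sub_div _ _ h22 hD]
  field_simp
  ring

end Phi4

/-- With the trace pairing on 2×2 symmetric matrices, the map `MLE(S) = −∇_S log Φ`
(gradient convention `(∇f)ᵢⱼ = (1/(2−δᵢⱼ)) ∂f/∂sᵢⱼ`) equals
`(2/(s₂₂(s₁₁s₂₂ − s₁₂² + s₂₂²))) · [[s₂₂², −s₁₂s₂₂],[−s₁₂s₂₂, s₁₂² + s₂₂²]]`,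
and `det(MLE(S)) = Φ(S)`, i.e. `Φ` solves the homaloidal PDE `Φ = det(−∇ log Φ)`. -/
theorem mle_formula_and_homaloidal (s11 s12 s22 : ℂ)
    (hD : s11 * s22 - s12 ^ 2 + s22 ^ 2 ≠ 0) (h22 : s22 ≠ 0) :
    let Φ := Phi4 s11 s12 s22
    let K11 := -(deriv (fun t => Phi4 t s12 s22) s11) / Φ
    let K12 := -((1 / 2 : ℂ) * deriv (fun t => Phi4 s11 t s22) s12) / Φ
    let K22 := -(deriv (fun t => Phi4 s11 s12 t) s22) / Φ
    (!![K11, K12; K12, K22] =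
      (2 / (s22 * (s11 * s22 - s12 ^ 2 + s22 ^ 2))) •
        !![s22 ^ 2, -(s12 * s22); -(s12 * s22), s12 ^ 2 + s22 ^ 2]) ∧
    (!![K11, K12; K12, K22]).det = Φ := by
  intro Φ K11 K12 K22
  have hK11 : K11 = -logDeriv (fun t => Phi4 t s12 s22) s11 := neg_div _ _
  have hK12 : K12 = -(1 / 2 * logDeriv (fun t => Phi4 s11 t s22) s12) := by
    rw [logDeriv_apply, ← mul_div_assoc]; exact neg_div _ _
  have hK22 : K22 = -logDeriv (fun t => Phi4 s11 s12 t) s22 := neg_div _ _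
  rw [logDeriv_Phi4_s11 hD h22, neg_neg] at hK11
  rw [logDeriv_Phi4_s12 hD h22] at hK12
  rw [logDeriv_Phi4_s22 hD h22, neg_neg] at hK22
  refine ⟨?_, ?_⟩
  · rw [hK11, hK12, hK22, Matrix.smul_of, EmbeddingLike.apply_eq_iff_eq]
    simp only [Matrix.smul_cons, Matrix.smul_empty, smul_eq_mul, Matrix.vecCons_inj, and_true]
    refine ⟨⟨?_, ?_⟩, ?_, ?_⟩ <;> field_simp <;> ring
  · rw [Matrix.det_fin_two_of, hK11, hK12, hK22]
    simp only [Φ, Phi4]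
    field_simp
    ring
end

section
/- Let Φ(u₀,u₁,u₂,u₃) = u₁u₂/(u₁²u₂² − u₀u₂³ − u₁³u₃ + u₀u₁u₂u₃). Then, writing ∇Φ for the gradient with respect to (u₀,u₁,u₂,u₃) and MLEᵢ = −(∂Φ/∂uᵢ)/Φ, the identity MLE₀ · MLE₃ = Φ holds as rational functions; i.e., Φ solves the homaloidal PDE Φ = F(−∇ log Φ) for F = x₀x₃. -/
/-!
The denominator `D = (u₁u₃ − u₂²)(u₀u₂ − u₁²)` of `Φ` is affine in `u₀` and in `u₃` while the
numerator does not involve them, so `−∂ᵢ log Φ = ∂ᵢD / D` for `i = 0, 3`. Since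
`∂₀D = u₂(u₁u₃ − u₂²)` and `∂₃D = u₁(u₀u₂ − u₁²)`, their product is `u₁u₂ · D`, and dividing
by `D²` gives `Φ`.
-/

/-- `Φ(u₀,u₁,u₂,u₃) = u₁u₂/(u₁²u₂² − u₀u₂³ − u₁³u₃ + u₀u₁u₂u₃)`. -/
noncomputable def Phi10 (u0 u1 u2 u3 : ℂ) : ℂ :=
  u1 * u2 / (u1 ^ 2 * u2 ^ 2 - u0 * u2 ^ 3 - u1 ^ 3 * u3 + u0 * u1 * u2 * u3)

section AffineDenominator

variable {𝕜 : Type*} [NontriviallyNormedField 𝕜]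

theorem hasDerivAt_div_affine (N a b t : 𝕜) (h : a + b * t ≠ 0) :
    HasDerivAt (fun s => N / (a + b * s)) (-(N * b) / (a + b * t) ^ 2) t := by
  have hD : HasDerivAt (fun s => a + b * s) b t := by
    simpa using ((hasDerivAt_id t).const_mul b).const_add a
  simpa using (hasDerivAt_const t N).fun_div hD h

theorem neg_deriv_div_affine_div_self {N a b t : 𝕜} (hN : N ≠ 0) (h : a + b * t ≠ 0) :
    -deriv (fun s => N / (a + b * s)) t / (N / (a + b * t)) = b / (a + b * t) := by
  rw [(hasDerivAt_div_affine N a b t h).deriv]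
  field_simp

end AffineDenominator

section Phi10

variable (u0 u1 u2 u3 : ℂ)

theorem phi10_eq_div_affine_fst :
    Phi10 u0 u1 u2 u3 =
      u1 * u2 / ((u1 ^ 2 * u2 ^ 2 - u1 ^ 3 * u3) + u2 * (u1 * u3 - u2 ^ 2) * u0) := by
  rw [Phi10]; congr 1; ring

theorem phi10_eq_div_affine_last :
    Phi10 u0 u1 u2 u3 =
      u1 * u2 / ((u1 ^ 2 * u2 ^ 2 - u0 * u2 ^ 3) + u1 * (u0 * u2 - u1 ^ 2) * u3) := by
  rw [Phi10]; congr 1; ring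

theorem phi10_denom_eq_mul :
    u1 ^ 2 * u2 ^ 2 - u0 * u2 ^ 3 - u1 ^ 3 * u3 + u0 * u1 * u2 * u3 =
      (u1 * u3 - u2 ^ 2) * (u0 * u2 - u1 ^ 2) := by
  ring

end Phi10

/-- With `MLEᵢ = −(∂Φ/∂uᵢ)/Φ`, the identity `MLE₀ · MLE₃ = Φ` holds; i.e. `Φ` solves
the homaloidal PDE `Φ = F(−∇ log Φ)` for `F = x₀x₃`. -/
theorem twisted_cubic_homaloidal (u0 u1 u2 u3 : ℂ)
    (hden : u1 ^ 2 * u2 ^ 2 - u0 * u2 ^ 3 - u1 ^ 3 * u3 + u0 * u1 * u2 * u3 ≠ 0)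
    (hnum : u1 * u2 ≠ 0) :
    (-(deriv (fun t => Phi10 t u1 u2 u3) u0) / Phi10 u0 u1 u2 u3) *
      (-(deriv (fun t => Phi10 u0 u1 u2 t) u3) / Phi10 u0 u1 u2 u3)
      = Phi10 u0 u1 u2 u3 := by
  rw [phi10_denom_eq_mul] at hden
  have mle0 : -(deriv (fun t => Phi10 t u1 u2 u3) u0) / Phi10 u0 u1 u2 u3 =
      u2 * (u1 * u3 - u2 ^ 2) / ((u1 * u3 - u2 ^ 2) * (u0 * u2 - u1 ^ 2)) := by
    simp only [phi10_eq_div_affine_fst _ u1 u2 u3]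
    rw [neg_deriv_div_affine_div_self hnum
      fun h0 => hden (by linear_combination h0)]
    congr 1; ring
  have mle3 : -(deriv (fun t => Phi10 u0 u1 u2 t) u3) / Phi10 u0 u1 u2 u3 =
      u1 * (u0 * u2 - u1 ^ 2) / ((u1 * u3 - u2 ^ 2) * (u0 * u2 - u1 ^ 2)) := by
    simp only [phi10_eq_div_affine_last u0 u1 u2]
    rw [neg_deriv_div_affine_div_self hnum
      fun h0 => hden (by linear_combination h0)]
    congr 1; ring
  rw [mle0, mle3, Phi10, phi10_denom_eq_mul]
  field_simp
end

section
/- The components of the map u ↦ −∇ log Φ for Φ(u₀,u₁,u₂,u₃) = u₁u₂/(u₁²u₂² − u₀u₂³ − u₁³u₃ + u₀u₁u₂u₃) satisfy the discriminant equation of the twisted cubic: x₁²x₂² − 4x₀x₂³ − 4x₁³x₃ + 18x₀x₁x₂x₃ − 27x₀²x₃² = 0, where (x₀,x₁,x₂,x₃) = −∇ log Φ (as rational functions). -/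
/-!
Since `Φ = u₁u₂ / D`, we have `−∂ᵢ log Φ = ∂ᵢ D / D − ∂ᵢ log (u₁u₂)`. Computing these, the
binary cubic `x₀s³ + x₁s²t + x₂st² + x₃t³` turns out to be `(u₂s − u₁t)² (c s + d t)` with
`c = (u₁u₃ − u₂²)/(u₂D)` and `d = (u₀u₂ − u₁²)/(u₁D)`: it has the double root `(s : t) = (u₁ : u₂)`,
so its discriminant, which is the given quartic, vanishes.
-/

/-- `Φ(u₀,u₁,u₂,u₃) = u₁u₂/(u₁²u₂² − u₀u₂³ − u₁³u₃ + u₀u₁u₂u₃)`. -/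
noncomputable def Phi11 (u0 u1 u2 u3 : ℂ) : ℂ :=
  u1 * u2 / (u1 ^ 2 * u2 ^ 2 - u0 * u2 ^ 3 - u1 ^ 3 * u3 + u0 * u1 * u2 * u3)

/-- The coefficients are those of `(aX + b)² (cX + d)`. -/
theorem Cubic.discr_sq_mul_linear_eq_zero {R : Type*} [CommRing R] (a b c d : R) :
    (⟨a ^ 2 * c, a ^ 2 * d + 2 * a * b * c, b ^ 2 * c + 2 * a * b * d, b ^ 2 * d⟩ : Cubic R).discr
      = 0 := by
  simp only [Cubic.discr]
  ring

section Deriv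

variable {𝕜 : Type*} [NontriviallyNormedField 𝕜]

theorem hasDerivAt_cubic (a b c d x : 𝕜) :
    HasDerivAt (fun t => a * t ^ 3 + b * t ^ 2 + c * t + d) (3 * a * x ^ 2 + 2 * b * x + c) x :=
  ((((hasDerivAt_pow 3 x).const_mul a).add ((hasDerivAt_pow 2 x).const_mul b)).add
    ((hasDerivAt_id' x).const_mul c)).add_const d |>.congr_deriv (by push_cast; ring)

theorem neg_deriv_div_div_eq {f g : 𝕜 → 𝕜} {x f' g' : 𝕜} (hf : HasDerivAt f f' x)
    (hg : HasDerivAt g g' x) (hfx : f x ≠ 0) (hgx : g x ≠ 0) :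
    -deriv (fun t => f t / g t) x / (f x / g x) = g' / g x - f' / f x := by
  have h := logDeriv_div x hfx hgx hf.differentiableAt hg.differentiableAt
  simp only [logDeriv_apply, hf.deriv, hg.deriv] at h
  rw [neg_div, h, neg_sub]

end Deriv

def phiDen (u0 u1 u2 u3 : ℂ) : ℂ :=
  u1 ^ 2 * u2 ^ 2 - u0 * u2 ^ 3 - u1 ^ 3 * u3 + u0 * u1 * u2 * u3

section PartialDerivs

variable (u0 u1 u2 u3 : ℂ)

theorem hasDerivAt_phiDen_u0 : HasDerivAt (phiDen · u1 u2 u3) (u1 * u2 * u3 - u2 ^ 3) u0 := by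
  have h : (phiDen · u1 u2 u3) =
      fun t => (u1 * u2 * u3 - u2 ^ 3) * t + (u1 ^ 2 * u2 ^ 2 - u1 ^ 3 * u3) := by
    funext t; simp only [phiDen]; ring
  rw [h]
  exact ((hasDerivAt_id' u0).const_mul _).add_const _ |>.congr_deriv (mul_one _)

theorem hasDerivAt_phiDen_u1 :
    HasDerivAt (phiDen u0 · u2 u3) (2 * u1 * u2 ^ 2 - 3 * u1 ^ 2 * u3 + u0 * u2 * u3) u1 := by
  have h : (phiDen u0 · u2 u3) =
      fun t => -u3 * t ^ 3 + u2 ^ 2 * t ^ 2 + u0 * u2 * u3 * t + -(u0 * u2 ^ 3) := by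
    funext t; simp only [phiDen]; ring
  rw [h]
  exact (hasDerivAt_cubic _ _ _ _ u1).congr_deriv (by ring)

theorem hasDerivAt_phiDen_u2 :
    HasDerivAt (phiDen u0 u1 · u3) (2 * u1 ^ 2 * u2 - 3 * u0 * u2 ^ 2 + u0 * u1 * u3) u2 := by
  have h : (phiDen u0 u1 · u3) =
      fun t => -u0 * t ^ 3 + u1 ^ 2 * t ^ 2 + u0 * u1 * u3 * t + -(u1 ^ 3 * u3) := by
    funext t; simp only [phiDen]; ring
  rw [h]
  exact (hasDerivAt_cubic _ _ _ _ u2).congr_deriv (by ring)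

theorem hasDerivAt_phiDen_u3 : HasDerivAt (phiDen u0 u1 u2 ·) (u0 * u1 * u2 - u1 ^ 3) u3 := by
  have h : (phiDen u0 u1 u2 ·) =
      fun t => (u0 * u1 * u2 - u1 ^ 3) * t + (u1 ^ 2 * u2 ^ 2 - u0 * u2 ^ 3) := by
    funext t; simp only [phiDen]; ring
  rw [h]
  exact ((hasDerivAt_id' u3).const_mul _).add_const _ |>.congr_deriv (mul_one _)

end PartialDerivs

/-- The components of `u ↦ −∇ log Φ` satisfy the discriminant equation of the twisted
cubic: `x₁²x₂² − 4x₀x₂³ − 4x₁³x₃ + 18x₀x₁x₂x₃ − 27x₀²x₃² = 0`. -/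
theorem mle_image_on_discriminant (u0 u1 u2 u3 : ℂ)
    (hden : u1 ^ 2 * u2 ^ 2 - u0 * u2 ^ 3 - u1 ^ 3 * u3 + u0 * u1 * u2 * u3 ≠ 0)
    (hnum : u1 * u2 ≠ 0) :
    let Φ := Phi11 u0 u1 u2 u3
    let x0 := -(deriv (fun t => Phi11 t u1 u2 u3) u0) / Φ
    let x1 := -(deriv (fun t => Phi11 u0 t u2 u3) u1) / Φ
    let x2 := -(deriv (fun t => Phi11 u0 u1 t u3) u2) / Φ
    let x3 := -(deriv (fun t => Phi11 u0 u1 u2 t) u3) / Φ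
    x1 ^ 2 * x2 ^ 2 - 4 * x0 * x2 ^ 3 - 4 * x1 ^ 3 * x3 + 18 * x0 * x1 * x2 * x3
      - 27 * x0 ^ 2 * x3 ^ 2 = 0 := by
  intro Φ x0 x1 x2 x3
  obtain ⟨hu1, hu2⟩ := mul_ne_zero_iff.mp hnum
  set D := phiDen u0 u1 u2 u3
  have hD : D ≠ 0 := hden
  have hx0 : x0 = (u1 * u2 * u3 - u2 ^ 3) / D - 0 / (u1 * u2) :=
    neg_deriv_div_div_eq (hasDerivAt_const u0 _) (hasDerivAt_phiDen_u0 u0 u1 u2 u3) hnum hD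
  have hx1 : x1 = (2 * u1 * u2 ^ 2 - 3 * u1 ^ 2 * u3 + u0 * u2 * u3) / D - 1 * u2 / (u1 * u2) :=
    neg_deriv_div_div_eq ((hasDerivAt_id' u1).mul_const u2) (hasDerivAt_phiDen_u1 u0 u1 u2 u3)
      hnum hD
  have hx2 : x2 = (2 * u1 ^ 2 * u2 - 3 * u0 * u2 ^ 2 + u0 * u1 * u3) / D - u1 * 1 / (u1 * u2) :=
    neg_deriv_div_div_eq ((hasDerivAt_id' u2).const_mul u1) (hasDerivAt_phiDen_u2 u0 u1 u2 u3)
      hnum hD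
  have hx3 : x3 = (u0 * u1 * u2 - u1 ^ 3) / D - 0 / (u1 * u2) :=
    neg_deriv_div_div_eq (hasDerivAt_const u3 _) (hasDerivAt_phiDen_u3 u0 u1 u2 u3) hnum hD
  have hdiscr : (⟨x0, x1, x2, x3⟩ : Cubic ℂ).discr = 0 := by
    refine (congrArg Cubic.discr (Cubic.ext ?_ ?_ ?_ ?_)).trans
      (Cubic.discr_sq_mul_linear_eq_zero u2 (-u1) ((u1 * u3 - u2 ^ 2) / (u2 * D))
        ((u0 * u2 - u1 ^ 2) / (u1 * D)))
    all_goals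
      simp only [hx0, hx1, hx2, hx3]
      field_simp
      simp only [D, phiDen]
      ring
  simp only [Cubic.discr] at hdiscr
  linear_combination hdiscr
end
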